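/- arXiv:2205.12797 — 2 statements merged into one kernel-verified Lean document; each statement's English description precedes it below -/
import Mathlib

section
/- Let (Ω, P) be a probability space, U ⊆ ℝ^K open, x₀, x₀' ∈ U, and f : Ω × U → ℝ a family of square-integrable random variables, i.e. f(·, x) ∈ L²(P) for every x ∈ U. Assume that for P-almost every ω the partial derivative ∂f(ω, x)/∂x_k exists for all x in neighborhoods V of x₀ and V' of x₀', and that there exists h ∈ L²(P) with |∂f(ω, x)/∂x_k| ≤ h(ω) for all x ∈ V ∪ V' and P-almost every ω. Then the mixed partial derivative ∂²/∂x_k ∂x'_k of the covariance function k(x, x') = Cov(f(·, x), f(·, x')) at (x₀, x₀') exists and equals Cov(∂f(·, x₀)/∂x_k, ∂f(·, x₀')/∂x_k). (The paper's equation (17): the covariance kernel of the k-th partial-derivative process is k^{∂_k ∂'_k}(x, x') = ∂²k(x, x')/∂x_k ∂x'_k.) -/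
/-!
Centering the first argument gives `Cov(g, Y) = E[(g - E g) Y]`, so a derivative in the second
argument passes under the integral by dominated convergence, with the integrable bound
`|g - E g| h` (both factors are in `L²`). The derivative `∂_k f(·, x)` is in `L²` because it is
bounded by `h` and, as an a.e. limit of difference quotients, measurable. Differentiating first
in `x'` and then, with `g = ∂_k f(·, x₀')`, in `x` gives the mixed derivative.
-/

open MeasureTheory ProbabilityTheory
open scoped Matrix

/-- A measure `ν` on `ι → ℝ` is a multivariate normal distribution `N(m, S)`:
every linear functional pushes `ν` forward to the corresponding univariate Gaussian. -/
def IsGaussianMeasure {ι : Type*} [Fintype ι] (ν : Measure (ι → ℝ))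
    (m : ι → ℝ) (S : Matrix ι ι ℝ) : Prop :=
  ∀ t : ι → ℝ,
    ν.map (fun x => ∑ i, t i * x i) =
      gaussianReal (∑ i, t i * m i) (Real.toNNReal (∑ i, ∑ j, t i * S i j * t j))

/-- `X` is a Gaussian random vector on `ι → ℝ` under `P`, with mean vector `m`
and covariance matrix `S`. -/
def IsGaussianVec {Ω : Type*} [MeasurableSpace Ω] (P : Measure Ω)
    {ι : Type*} [Fintype ι]
    (X : Ω → ι → ℝ) (m : ι → ℝ) (S : Matrix ι ι ℝ) : Prop :=
  Measurable X ∧ IsGaussianMeasure (P.map X) m S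

/-- Covariance of two real random variables. -/
noncomputable def covFn {Ω : Type*} [MeasurableSpace Ω] (P : Measure Ω) (X Y : Ω → ℝ) : ℝ :=
  ∫ ω, (X ω - ∫ ω', X ω' ∂P) * (Y ω - ∫ ω', Y ω' ∂P) ∂P

open Filter Topology

section

variable {Ω : Type*} [MeasurableSpace Ω] {μ : Measure Ω}

lemma covFn_eq_covariance (X Y : Ω → ℝ) : covFn μ X Y = cov[X, Y; μ] := rfl

lemma covariance_eq_integral_sub_mul [IsProbabilityMeasure μ] {X Y : Ω → ℝ}
    (hX : MemLp X 2 μ) (hY : MemLp Y 2 μ) :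
    cov[X, Y; μ] = ∫ ω, (X ω - μ[X]) * Y ω ∂μ := by
  have hXc : MemLp (fun ω => X ω - μ[X]) 2 μ := hX.sub (memLp_const _)
  rw [← covariance_sub_const_left (hX.integrable one_le_two), covariance_eq_sub hXc hY,
    integral_sub (hX.integrable one_le_two) (integrable_const _)]
  simp

lemma aestronglyMeasurable_of_hasDerivAt_ae {𝕜 E : Type*} [NontriviallyNormedField 𝕜]
    [NormedAddCommGroup E] [NormedSpace 𝕜 E] {F : 𝕜 → Ω → E} {F' : Ω → E} {t₀ : 𝕜}
    (hF : ∀ᶠ t in 𝓝 t₀, AEStronglyMeasurable (F t) μ)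
    (hdiff : ∀ᵐ ω ∂μ, HasDerivAt (F · ω) (F' ω) t₀) :
    AEStronglyMeasurable F' μ := by
  obtain ⟨ts, hts, hts_meas⟩ :=
    exists_seq_forall_of_frequently (hF.filter_mono (nhdsWithin_le_nhds (s := {t₀}ᶜ))).frequently
  refine aestronglyMeasurable_of_tendsto_ae atTop
    (f := fun n ω => slope (F · ω) t₀ (ts n)) (fun n => ?_) ?_
  · simp only [slope_def_module]
    exact ((hts_meas n).sub hF.self_of_nhds).const_smul _
  · filter_upwards [hdiff] with ω hω
    exact hω.tendsto_slope.comp hts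

lemma HasLineDerivAt.hasDerivAt_add_smul {𝕜 E G : Type*} [NontriviallyNormedField 𝕜]
    [AddCommGroup E] [Module 𝕜 E] [NormedAddCommGroup G] [NormedSpace 𝕜 G]
    {f : E → G} {f' : G} {x v : E} {t : 𝕜} (hf : HasLineDerivAt 𝕜 f f' (x + t • v) v) :
    HasDerivAt (fun s => f (x + s • v)) f' t := by
  have h : HasDerivAt (fun s => f (x + t • v + s • v)) f' (t - t) := by
    rw [sub_self]; exact hf
  convert h.comp_sub_const t t using 2 with s
  rw [sub_smul]; abel_nf

lemma memLp_of_hasDerivAt_ae {𝕜 E : Type*} [NontriviallyNormedField 𝕜]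
    [NormedAddCommGroup E] [NormedSpace 𝕜 E] {p : ENNReal} {F : 𝕜 → Ω → E} {F' : Ω → E}
    {h : Ω → ℝ} {t₀ : 𝕜} (hF : ∀ᶠ t in 𝓝 t₀, AEStronglyMeasurable (F t) μ)
    (hdiff : ∀ᵐ ω ∂μ, HasDerivAt (F · ω) (F' ω) t₀) (hh : MemLp h p μ)
    (hbound : ∀ᵐ ω ∂μ, ‖F' ω‖ ≤ h ω) :
    MemLp F' p μ :=
  hh.of_le (aestronglyMeasurable_of_hasDerivAt_ae hF hdiff)
    (hbound.mono fun _ hω => hω.trans (le_abs_self _))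

lemma hasDerivAt_covariance_right [IsProbabilityMeasure μ] {F F' : ℝ → Ω → ℝ} {g h : Ω → ℝ}
    {s : Set ℝ} {t₀ : ℝ} (hg : MemLp g 2 μ) (hh : MemLp h 2 μ) (hs : s ∈ 𝓝 t₀)
    (hF : ∀ t ∈ s, MemLp (F t) 2 μ) (hdiff : ∀ᵐ ω ∂μ, ∀ t ∈ s, HasDerivAt (F · ω) (F' t ω) t)
    (hbound : ∀ᵐ ω ∂μ, ∀ t ∈ s, |F' t ω| ≤ h ω) :
    HasDerivAt (fun t => cov[g, F t; μ]) cov[g, F' t₀; μ] t₀ := by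
  have ht₀ : t₀ ∈ s := mem_of_mem_nhds hs
  have hF' : MemLp (F' t₀) 2 μ :=
    memLp_of_hasDerivAt_ae (eventually_of_mem hs fun t ht => (hF t ht).aestronglyMeasurable)
      (hdiff.mono fun _ hω => hω t₀ ht₀) hh (hbound.mono fun _ hω => hω t₀ ht₀)
  set g₀ : Ω → ℝ := fun ω => g ω - μ[g]
  have hg₀ : MemLp g₀ 2 μ := hg.sub (memLp_const _)
  have hint := hasDerivAt_integral_of_dominated_loc_of_deriv_le (μ := μ)
    (F := fun t ω => g₀ ω * F t ω) (F' := fun t ω => g₀ ω * F' t ω)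
    (bound := fun ω => |g₀ ω| * h ω) hs
    (eventually_of_mem hs fun t ht => hg₀.aestronglyMeasurable.mul (hF t ht).aestronglyMeasurable)
    (hg₀.integrable_mul (hF t₀ ht₀)) (hg₀.aestronglyMeasurable.mul hF'.aestronglyMeasurable)
    (hbound.mono fun ω hω t ht => by
      rw [Real.norm_eq_abs, abs_mul]; exact mul_le_mul_of_nonneg_left (hω t ht) (abs_nonneg _))
    (hg₀.abs.integrable_mul hh)
    (hdiff.mono fun ω hω t ht => (hω t ht).const_mul (g₀ ω))
  rw [covariance_eq_integral_sub_mul hg hF']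
  exact hint.2.congr_of_eventuallyEq
    (eventually_of_mem hs fun t ht => covariance_eq_integral_sub_mul hg (hF t ht))

variable {E : Type*} [NormedAddCommGroup E] [NormedSpace ℝ E] {f : Ω → E → ℝ} {h : Ω → ℝ}
  {y v : E} {W : Set E}

lemma preimage_add_smul_mem_nhds_zero (hW : W ∈ 𝓝 y) :
    (fun t : ℝ => y + t • v) ⁻¹' W ∈ 𝓝 0 :=
  Continuous.tendsto' (by fun_prop) 0 y (by simp) hW

lemma memLp_lineDeriv {p : ENNReal} (hh : MemLp h p μ) (hW : W ∈ 𝓝 y)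
    (hmeas : ∀ x ∈ W, AEStronglyMeasurable (fun ω => f ω x) μ)
    (hdiff : ∀ᵐ ω ∂μ, LineDifferentiableAt ℝ (f ω) y v)
    (hdom : ∀ᵐ ω ∂μ, |lineDeriv ℝ (f ω) y v| ≤ h ω) :
    MemLp (fun ω => lineDeriv ℝ (f ω) y v) p μ :=
  memLp_of_hasDerivAt_ae (F := fun t ω => f ω (y + t • v))
    (eventually_of_mem (preimage_add_smul_mem_nhds_zero hW) fun _ ht => hmeas _ ht)
    (hdiff.mono fun _ hω => hω.hasLineDerivAt) hh hdom

lemma hasLineDerivAt_covariance_right [IsProbabilityMeasure μ] {g : Ω → ℝ} (hg : MemLp g 2 μ)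
    (hh : MemLp h 2 μ) (hW : W ∈ 𝓝 y) (hL2 : ∀ x ∈ W, MemLp (fun ω => f ω x) 2 μ)
    (hdiff : ∀ᵐ ω ∂μ, ∀ x ∈ W, LineDifferentiableAt ℝ (f ω) x v)
    (hdom : ∀ᵐ ω ∂μ, ∀ x ∈ W, |lineDeriv ℝ (f ω) x v| ≤ h ω) :
    HasLineDerivAt ℝ (fun x => cov[g, fun ω => f ω x; μ])
      cov[g, fun ω => lineDeriv ℝ (f ω) y v; μ] y v := by
  unfold HasLineDerivAt
  simpa only [zero_smul, add_zero] using hasDerivAt_covariance_right (t₀ := 0)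
    (F := fun t ω => f ω (y + t • v)) (F' := fun t ω => lineDeriv ℝ (f ω) (y + t • v) v) hg hh
    (preimage_add_smul_mem_nhds_zero hW) (fun _ ht => hL2 _ ht)
    (hdiff.mono fun _ hω _ ht => (hω _ ht).hasLineDerivAt.hasDerivAt_add_smul)
    (hdom.mono fun _ hω _ ht => hω _ ht)

end

theorem cov_mixed_partial_deriv_general
    {Ω : Type*} [MeasurableSpace Ω] (P : Measure Ω) [IsProbabilityMeasure P]
    {K : ℕ} (U : Set (Fin K → ℝ))
    (x₀ x₀' : Fin K → ℝ)
    (f : Ω → (Fin K → ℝ) → ℝ)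
    (hL2 : ∀ x ∈ U, MemLp (fun ω => f ω x) 2 P)
    (k : Fin K)
    (V V' : Set (Fin K → ℝ))
    (hV : V ∈ nhds x₀) (hV' : V' ∈ nhds x₀') (hVU : V ⊆ U) (hV'U : V' ⊆ U)
    (hdiff : ∀ᵐ ω ∂P, ∀ x ∈ V ∪ V', LineDifferentiableAt ℝ (f ω) x (Pi.single k 1))
    (h : Ω → ℝ) (hh : MemLp h 2 P)
    (hdom : ∀ᵐ ω ∂P, ∀ x ∈ V ∪ V', |lineDeriv ℝ (f ω) x (Pi.single k 1)| ≤ h ω) :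
    (∀ x ∈ U, LineDifferentiableAt ℝ
        (fun x' => covFn P (fun ω => f ω x) (fun ω => f ω x')) x₀' (Pi.single k 1)) ∧
    HasLineDerivAt ℝ
      (fun x => lineDeriv ℝ
        (fun x' => covFn P (fun ω => f ω x) (fun ω => f ω x')) x₀' (Pi.single k 1))
      (covFn P (fun ω => lineDeriv ℝ (f ω) x₀ (Pi.single k 1))
        (fun ω => lineDeriv ℝ (f ω) x₀' (Pi.single k 1)))
      x₀ (Pi.single k 1) := by
  simp only [covFn_eq_covariance]
  have hdiffV := hdiff.mono fun _ hω x hx => hω x (Or.inl hx)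
  have hdiffV' := hdiff.mono fun _ hω x hx => hω x (Or.inr hx)
  have hdomV := hdom.mono fun _ hω x hx => hω x (Or.inl hx)
  have hdomV' := hdom.mono fun _ hω x hx => hω x (Or.inr hx)
  have hinner : ∀ x ∈ U, HasLineDerivAt ℝ (fun x' => cov[fun ω => f ω x, fun ω => f ω x'; P])
      cov[fun ω => f ω x, fun ω => lineDeriv ℝ (f ω) x₀' (Pi.single k 1); P] x₀' (Pi.single k 1) :=
    fun x hx => hasLineDerivAt_covariance_right (hL2 x hx) hh hV' (fun x hx => hL2 x (hV'U hx))
      hdiffV' hdomV'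
  refine ⟨fun x hx => (hinner x hx).lineDifferentiableAt, ?_⟩
  have hderiv_mem : MemLp (fun ω => lineDeriv ℝ (f ω) x₀' (Pi.single k 1)) 2 P :=
    memLp_lineDeriv hh hV' (fun x hx => (hL2 x (hV'U hx)).aestronglyMeasurable)
      (hdiffV'.mono fun _ hω => hω x₀' (mem_of_mem_nhds hV'))
      (hdomV'.mono fun _ hω => hω x₀' (mem_of_mem_nhds hV'))
  rw [covariance_comm]
  refine (hasLineDerivAt_covariance_right hderiv_mem hh hV (fun x hx => hL2 x (hVU hx)) hdiffV
    hdomV).congr_of_eventuallyEq (eventually_of_mem hV fun x hx => ?_)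
  dsimp only
  rw [(hinner x (hVU hx)).lineDeriv, covariance_comm]

/-- **Kernel of the derivative process (equation (17)).**
Under the stated domination assumptions on the `k`-th partial derivative of the family
`f` near `x₀` and near `x₀'`, the mixed partial derivative
`∂²/∂x_k ∂x'_k` of `k(x,x') = Cov(f(·,x), f(·,x'))` at `(x₀, x₀')` exists and equals
`Cov(∂_k f(·,x₀), ∂_k f(·,x₀'))`. -/
theorem cov_mixed_partial_deriv
    {Ω : Type*} [MeasurableSpace Ω] (P : Measure Ω) [IsProbabilityMeasure P]
    {K : ℕ} (U : Set (Fin K → ℝ)) (hU : IsOpen U)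
    (x₀ x₀' : Fin K → ℝ) (hx₀ : x₀ ∈ U) (hx₀' : x₀' ∈ U)
    (f : Ω → (Fin K → ℝ) → ℝ)
    (hL2 : ∀ x ∈ U, MemLp (fun ω => f ω x) 2 P)
    (k : Fin K)
    (V V' : Set (Fin K → ℝ))
    (hV : V ∈ nhds x₀) (hV' : V' ∈ nhds x₀') (hVU : V ⊆ U) (hV'U : V' ⊆ U)
    (hdiff : ∀ᵐ ω ∂P, ∀ x ∈ V ∪ V', LineDifferentiableAt ℝ (f ω) x (Pi.single k 1))
    (h : Ω → ℝ) (hh : MemLp h 2 P)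
    (hdom : ∀ᵐ ω ∂P, ∀ x ∈ V ∪ V', |lineDeriv ℝ (f ω) x (Pi.single k 1)| ≤ h ω) :
    (∀ x ∈ U, LineDifferentiableAt ℝ
        (fun x' => covFn P (fun ω => f ω x) (fun ω => f ω x')) x₀' (Pi.single k 1)) ∧
    HasLineDerivAt ℝ
      (fun x => lineDeriv ℝ
        (fun x' => covFn P (fun ω => f ω x) (fun ω => f ω x')) x₀' (Pi.single k 1))
      (covFn P (fun ω => lineDeriv ℝ (f ω) x₀ (Pi.single k 1))
        (fun ω => lineDeriv ℝ (f ω) x₀' (Pi.single k 1)))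
      x₀ (Pi.single k 1) :=
  cov_mixed_partial_deriv_general P U x₀ x₀' f hL2 k V V' hV hV' hVU hV'U hdiff h hh hdom
end

section
/- Let σ : ℝ → ℝ be the sigmoid function σ(x) = 1/(1 + exp(−x)). Then for every n ≥ 1 and every x ∈ ℝ, the n-th derivative of σ satisfies σ^{(n)}(x) = Σ_{k=1}^{n+1} (−1)^{k+1} (k−1)! · Stir(n+1, k) · σ(x)^k, where Stir(·, ·) denotes the Stirling number of the second kind and σ(x)^k is the k-th power of σ(x). -/
/-!
Since `σ' = σ - σ²`, differentiating a polynomial `∑ c k σ^k` in `σ` gives the polynomial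
`∑ c k · k (σ^k - σ^(k+1))`, whose coefficients are `k c k - (k-1) c (k-1)`. Under this map the
coefficients `(-1)^(k+1) (k-1)! S(n+1, k)` of `σ^(n)` go to those of `σ^(n+1)`: this is exactly the
recurrence `S(n+2, k) = k S(n+1, k) + S(n+1, k-1)`.
-/

/-- Stirling numbers of the second kind: `stirling2 n k` counts the partitions of an
`n`-element set into `k` nonempty blocks, via the recurrence
`S(n+1, k+1) = (k+1)·S(n, k+1) + S(n, k)`. -/
def stirling2 : ℕ → ℕ → ℕ
  | 0, 0 => 1
  | 0, _ + 1 => 0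
  | _ + 1, 0 => 0
  | n + 1, k + 1 => (k + 1) * stirling2 n (k + 1) + stirling2 n k

/-- The sigmoid function `σ(x) = 1 / (1 + exp(−x))`. -/
noncomputable def sigmoid (x : ℝ) : ℝ := 1 / (1 + Real.exp (-x))

open Finset

lemma stirling2_eq_zero_of_lt : ∀ {n k : ℕ}, n < k → stirling2 n k = 0
  | 0, k + 1, _ => rfl
  | n + 1, k + 1, h => by
    simp [stirling2, stirling2_eq_zero_of_lt (by omega : n < k + 1),
      stirling2_eq_zero_of_lt (by omega : n < k)]

lemma hasDerivAt_sigmoid (x : ℝ) : HasDerivAt sigmoid (sigmoid x - sigmoid x ^ 2) x := by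
  have hpos : 0 < 1 + Real.exp (-x) := by positivity
  have hden : HasDerivAt (fun y => 1 + Real.exp (-y)) (-Real.exp (-x)) x := by
    simpa using ((Real.hasDerivAt_exp (-x)).comp x (hasDerivAt_neg x)).const_add 1
  have hsig : sigmoid = fun y => (1 + Real.exp (-y))⁻¹ := funext fun y => one_div _
  rw [hsig]
  refine (hden.inv hpos.ne').congr_deriv ?_
  beta_reduce
  field_simp
  ring

def logisticDerivCoeff (c : ℕ → ℝ) : ℕ → ℝ
  | 0 => 0
  | k + 1 => (k + 1) * c (k + 1) - k * c k

section LogisticDeriv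

variable {g : ℝ → ℝ} (hg : ∀ x, HasDerivAt g (g x - g x ^ 2) x)
include hg

lemma hasDerivAt_pow_of_logistic (k : ℕ) (x : ℝ) :
    HasDerivAt (fun y => g y ^ k) (k * (g x ^ k - g x ^ (k + 1))) x := by
  refine ((hg x).fun_pow k).congr_deriv ?_
  rcases k with _ | k
  · simp
  · push_cast
    ring

lemma hasDerivAt_sum_pow_of_logistic (c : ℕ → ℝ) {M : ℕ} (hcM : c M = 0) (x : ℝ) :
    HasDerivAt (fun y => ∑ k ∈ range M, c k * g y ^ k)
      (∑ k ∈ range (M + 1), logisticDerivCoeff c k * g x ^ k) x := by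
  refine (HasDerivAt.fun_sum fun k _ =>
    (hasDerivAt_pow_of_logistic hg k x).const_mul (c k)).congr_deriv ?_
  have hshift : ∑ k ∈ range M, (k + 1 : ℝ) * c (k + 1) * g x ^ (k + 1) =
      ∑ k ∈ range M, k * c k * g x ^ k := by
    have h := sum_range_succ' (fun k => (k : ℝ) * c k * g x ^ k) M
    rw [sum_range_succ, hcM] at h
    simpa using h.symm
  calc ∑ k ∈ range M, c k * (k * (g x ^ k - g x ^ (k + 1)))
      = ∑ k ∈ range M, k * c k * g x ^ k - ∑ k ∈ range M, k * c k * g x ^ (k + 1) := by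
        rw [← sum_sub_distrib]
        exact sum_congr rfl fun k _ => by ring
    _ = ∑ k ∈ range M, ((k + 1 : ℝ) * c (k + 1) - k * c k) * g x ^ (k + 1) := by
        rw [← hshift, ← sum_sub_distrib]
        exact sum_congr rfl fun k _ => by ring
    _ = ∑ k ∈ range (M + 1), logisticDerivCoeff c k * g x ^ k := by
        simp [sum_range_succ' _ M, logisticDerivCoeff]

end LogisticDeriv

noncomputable def sigmoidCoeff (n k : ℕ) : ℝ :=
  (-1 : ℝ) ^ (k + 1) * (Nat.factorial (k - 1) : ℝ) * (stirling2 (n + 1) k : ℝ)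

lemma sigmoidCoeff_zero_right (n : ℕ) : sigmoidCoeff n 0 = 0 := by
  simp [sigmoidCoeff, stirling2]

lemma sigmoidCoeff_eq_zero_of_lt {n k : ℕ} (h : n + 1 < k) : sigmoidCoeff n k = 0 := by
  simp [sigmoidCoeff, stirling2_eq_zero_of_lt h]

lemma logisticDerivCoeff_sigmoidCoeff (n : ℕ) :
    logisticDerivCoeff (sigmoidCoeff n) = sigmoidCoeff (n + 1) := by
  funext k
  rcases k with _ | k
  · rw [logisticDerivCoeff, sigmoidCoeff_zero_right]
  · rw [logisticDerivCoeff]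
    rcases k with _ | k
    · simp [sigmoidCoeff, stirling2]
    · simp only [sigmoidCoeff, stirling2, Nat.add_sub_cancel, Nat.factorial_succ]
      push_cast
      ring

lemma iteratedDeriv_sigmoid_eq_sum_range (n : ℕ) :
    iteratedDeriv n sigmoid = fun x => ∑ k ∈ range (n + 2), sigmoidCoeff n k * sigmoid x ^ k := by
  induction n with
  | zero =>
    funext x
    simp [sum_range_succ, sigmoidCoeff, stirling2]
  | succ n ih =>
    funext x
    rw [iteratedDeriv_succ, ih, ← logisticDerivCoeff_sigmoidCoeff]
    exact (hasDerivAt_sum_pow_of_logistic hasDerivAt_sigmoid _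
      (sigmoidCoeff_eq_zero_of_lt (by omega)) x).deriv

theorem sigmoid_iteratedDeriv_general (n : ℕ) (x : ℝ) :
    iteratedDeriv n sigmoid x =
      ∑ k ∈ Finset.Icc 1 (n + 1),
        (-1 : ℝ) ^ (k + 1) * (Nat.factorial (k - 1) : ℝ) * (stirling2 (n + 1) k : ℝ) *
          sigmoid x ^ k := by
  simp only [iteratedDeriv_sigmoid_eq_sum_range]
  rw [range_eq_Ico, sum_eq_sum_Ico_succ_bot (by omega),
    sigmoidCoeff_zero_right, zero_mul, zero_add, ← Ico_add_one_right_eq_Icc]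
  rfl

/-- **Higher derivatives of the sigmoid function via Stirling numbers.**
For every `n ≥ 1` and `x ∈ ℝ`,
`σ^{(n)}(x) = ∑_{k=1}^{n+1} (−1)^{k+1} (k−1)! · Stir(n+1, k) · σ(x)^k`. -/
theorem sigmoid_iteratedDeriv (n : ℕ) (hn : 1 ≤ n) (x : ℝ) :
    iteratedDeriv n sigmoid x =
      ∑ k ∈ Finset.Icc 1 (n + 1),
        (-1 : ℝ) ^ (k + 1) * (Nat.factorial (k - 1) : ℝ) * (stirling2 (n + 1) k : ℝ) *
          sigmoid x ^ k :=
  sigmoid_iteratedDeriv_general n x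
end
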